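/- (SGRAND returns a maximum-likelihood element.) Suppose n ≥ 1, assume the reliability hypotheses (H1) and (H2), let (S, e) be an SGRAND run, and let E be a nonempty set of error vectors (e.g. the set of differences between the demodulated word and the code words). Then there exists g* < 2^n such that S g* is nonempty, e g* ∈ E, e g ∉ E for every g < g*, and Q v ≤ Q (e g*) for every v ∈ E; that is, the first queried element of E has maximal likelihood among all elements of E. -/

import Mathlib

/-- The index of the least reliable flipped bit: the largest coordinate `j`
with `e j ≠ 0` (as a natural number; `0` if `e = 0`). -/
def jstar {n : ℕ} (e : Fin n → ZMod 2) : ℕ :=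
  (Finset.univ.filter fun j => e j ≠ 0).sup fun j => (j : ℕ)

/-- The parent `π(e)` of an error vector: zero out coordinate `j*(e)` and,
if `j*(e) > 0`, set coordinate `j*(e) - 1` to `1`; `π(0) = 0`. -/
def parent {n : ℕ} (e : Fin n → ZMod 2) : Fin n → ZMod 2 :=
  if e = 0 then 0
  else fun j =>
    if (j : ℕ) = jstar e then 0
    else if 0 < jstar e ∧ (j : ℕ) = jstar e - 1 then 1
    else e j
/-- `deltaN k` is the vector with a `1` at the coordinate of index `k` and `0` elsewhere. -/
def deltaN {n : ℕ} (k : ℕ) : Fin n → ZMod 2 := fun i => if (i : ℕ) = k then 1 else 0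

/-- The children set `C(e)`. -/
def children {n : ℕ} (e : Fin n → ZMod 2) : Finset (Fin n → ZMod 2) :=
  if e = 0 then {deltaN 0}
  else if jstar e = n - 1 then ∅
  else {e + deltaN (jstar e + 1), e + deltaN (jstar e) + deltaN (jstar e + 1)}
/-- Likelihood of an error vector given per-bit likelihoods `q`. -/
noncomputable def Q {n : ℕ} (q : Fin n → ZMod 2 → NNReal) (e : Fin n → ZMod 2) : NNReal :=
  ∏ j, q j (e j)
/-- An SGRAND run: `S g` is the candidate set before the `(g+1)`-st query and
`E g` is the `(g+1)`-st queried error vector. -/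
def SGRANDRun {n : ℕ} (q : Fin n → ZMod 2 → NNReal)
    (S : ℕ → Finset (Fin n → ZMod 2)) (E : ℕ → Fin n → ZMod 2) : Prop :=
  S 0 = {0} ∧
  ∀ g, (S g).Nonempty →
    E g ∈ S g ∧ (∀ v ∈ S g, Q q v ≤ Q q (E g)) ∧
    S (g + 1) = (S g).erase (E g) ∪ children (E g)

/-!
The parent map organises all error vectors into a tree rooted at `0` whose children sets are
exactly the sets `C(e)`, and (H1), (H2) make the likelihood non-increasing from a parent to a
child. By induction, `S g` is the fringe of the set of the first `g` queries (the unqueried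
vectors that are `0` or have a queried parent); since queries are distinct and the fringe of a
proper subset is nonempty, the run queries every vector within `2 ^ n` steps. Each query lies in
the previous candidate set or is a child of the previous query, so the likelihoods of the queries
are non-increasing, and the first query in `Err` dominates every element of `Err`.
-/

variable {n : ℕ} {e v : Fin n → ZMod 2}

lemma le_jstar {j : Fin n} (h : e j ≠ 0) : (j : ℕ) ≤ jstar e :=
  Finset.le_sup (f := fun j : Fin n => (j : ℕ)) (by simpa using h)

lemma apply_eq_zero_of_jstar_lt {j : Fin n} (h : jstar e < j) : e j = 0 :=
  not_not.1 fun hj => (le_jstar hj).not_gt h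

lemma jstar_eq_of {K : Fin n} (hK : e K ≠ 0)
    (h : ∀ j : Fin n, K < j → e j = 0) : jstar e = K :=
  le_antisymm (Finset.sup_le fun j hj => not_lt.1 fun hlt => by simp_all) (le_jstar hK)

lemma exists_apply_jstar (he : e ≠ 0) :
    ∃ J : Fin n, (J : ℕ) = jstar e ∧ e J = 1 := by
  obtain ⟨J, hJ, hsup⟩ := Finset.exists_mem_eq_sup (Finset.univ.filter fun j => e j ≠ 0)
    (by simpa [Finset.filter_nonempty_iff] using Function.ne_iff.1 he) fun j => (j : ℕ)
  exact ⟨J, hsup.symm, Fin.eq_one_of_ne_zero _ (Finset.mem_filter.1 hJ).2⟩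

lemma parent_apply (hv : v ≠ 0) (j : Fin n) :
    parent v j = if (j : ℕ) = jstar v then 0
      else if 0 < jstar v ∧ (j : ℕ) = jstar v - 1 then 1 else v j := by
  simp [parent, hv]

lemma parent_apply_of_add_one_eq (hv : v ≠ 0) {I : Fin n}
    (hI : (I : ℕ) + 1 = jstar v) : parent v I = 1 := by
  rw [parent_apply hv, if_neg (by omega), if_pos ⟨by omega, by omega⟩]

lemma jstar_parent (hv : v ≠ 0) {I : Fin n} (hI : (I : ℕ) + 1 = jstar v) :
    jstar (parent v) = I :=
  jstar_eq_of (by simp [parent_apply_of_add_one_eq hv hI]) fun j hj => by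
    rw [Fin.lt_def] at hj
    rw [parent_apply hv]
    split_ifs
    · rfl
    · omega
    · exact apply_eq_zero_of_jstar_lt (by omega)

lemma deltaN_apply (k : ℕ) (j : Fin n) :
    (deltaN k : Fin n → ZMod 2) j = if (j : ℕ) = k then 1 else 0 :=
  rfl

lemma deltaN_zero_ne_zero (hn : 0 < n) : (deltaN 0 : Fin n → ZMod 2) ≠ 0 :=
  Function.ne_iff.2 ⟨⟨0, hn⟩, by simp [deltaN_apply]⟩

lemma parent_deltaN_zero (hn : 0 < n) : parent (deltaN 0 : Fin n → ZMod 2) = 0 := by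
  have h0 : jstar (deltaN 0 : Fin n → ZMod 2) = 0 :=
    jstar_eq_of (K := ⟨0, hn⟩) (by simp [deltaN_apply])
      fun j hj => if_neg (Nat.pos_iff_ne_zero.1 hj)
  funext j
  rw [parent_apply (deltaN_zero_ne_zero hn), h0]
  by_cases hj : (j : ℕ) = 0 <;> simp [hj, deltaN_apply]

lemma eq_deltaN_zero_of_jstar_eq_zero (hv : v ≠ 0) (h : jstar v = 0) :
    v = deltaN 0 := by
  obtain ⟨J, hJ, hvJ⟩ := exists_apply_jstar hv
  funext j
  rcases Nat.eq_zero_or_pos j with hj | hj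
  · rwa [deltaN_apply, if_pos hj, show j = J from Fin.ext (by omega)]
  · rw [deltaN_apply, if_neg hj.ne', apply_eq_zero_of_jstar_lt (e := v) (j := j) (by omega)]

lemma jstar_parent_lt (hp : parent v ≠ 0) : jstar (parent v) < jstar v := by
  have hv : v ≠ 0 := fun h => hp (by simp [parent, h])
  obtain ⟨J, hJ, -⟩ := exists_apply_jstar hv
  rcases Nat.eq_zero_or_pos (jstar v) with hm | hm
  · exact absurd (by rw [eq_deltaN_zero_of_jstar_eq_zero hv hm, parent_deltaN_zero (by omega)]) hp
  · rw [jstar_parent hv (I := ⟨jstar v - 1, by omega⟩) (by dsimp only; omega)]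
    exact Nat.sub_lt hm one_pos

lemma parent_of_mem_children (hn : 0 < n) (hv : v ∈ children e) :
    v ≠ 0 ∧ parent v = e := by
  unfold children at hv
  split_ifs at hv with he hlast
  · rw [Finset.mem_singleton.1 hv, he]
    exact ⟨deltaN_zero_ne_zero hn, parent_deltaN_zero hn⟩
  · simp at hv
  obtain ⟨J, hJ, heJ⟩ := exists_apply_jstar he
  have hK : jstar e + 1 < n := by have := J.isLt; omega
  let K : Fin n := ⟨jstar e + 1, hK⟩
  have heK : e K = 0 := apply_eq_zero_of_jstar_lt (Nat.lt_succ_self _)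
  have key : v K = 1 ∧
      ∀ j : Fin n, (j : ℕ) ≠ jstar e → (j : ℕ) ≠ jstar e + 1 → v j = e j := by
    rcases Finset.mem_insert.1 hv with rfl | hv <;> [skip; rw [Finset.mem_singleton.1 hv]] <;>
      exact ⟨by simp [deltaN_apply, K, heK], fun j h1 h2 => by simp [deltaN_apply, h1, h2]⟩
  have hv0 : v ≠ 0 := fun h => by simp [h] at key
  have hjv : jstar v = jstar e + 1 := jstar_eq_of (K := K) (by simp [key.1]) fun j hj => by
    have hj : jstar e + 1 < j := hj
    rw [key.2 j (by omega) (by omega)]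
    exact apply_eq_zero_of_jstar_lt (by omega)
  refine ⟨hv0, funext fun j => ?_⟩
  rw [parent_apply hv0, hjv]
  by_cases h1 : (j : ℕ) = jstar e + 1
  · rw [if_pos h1, show j = K from Fin.ext h1, heK]
  by_cases h2 : (j : ℕ) = jstar e
  · rw [if_neg h1, if_pos ⟨Nat.succ_pos _, by omega⟩, show j = J from Fin.ext (by omega), heJ]
  · rw [if_neg h1, if_neg (by omega), key.2 j h2 h1]

lemma mem_children_parent (hv : v ≠ 0) : v ∈ children (parent v) := by
  obtain ⟨J, hJ, hvJ⟩ := exists_apply_jstar hv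
  rcases Nat.eq_zero_or_pos (jstar v) with hm | hm
  · rw [eq_deltaN_zero_of_jstar_eq_zero hv hm, parent_deltaN_zero (by omega), children, if_pos rfl]
    exact Finset.mem_singleton_self _
  let I : Fin n := ⟨jstar v - 1, by omega⟩
  have hI : (I : ℕ) + 1 = jstar v := Nat.sub_add_cancel hm
  have hpI : parent v I = 1 := parent_apply_of_add_one_eq hv hI
  have hp0 : parent v ≠ 0 := fun h => by simp [h] at hpI
  have hpJ : parent v J = 0 := by rw [parent_apply hv, if_pos hJ]
  have hpj : ∀ j : Fin n, (j : ℕ) ≠ jstar v → (j : ℕ) ≠ I → parent v j = v j :=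
    fun j h1 h2 => by rw [parent_apply hv, if_neg h1, if_neg (by omega)]
  rw [children, if_neg hp0, jstar_parent hv hI, if_neg (by omega), hI, Finset.mem_insert,
    Finset.mem_singleton]
  rcases (by decide : ∀ x : ZMod 2, x = 0 ∨ x = 1) (v I) with h | h <;> [right; left] <;>
    funext j
  all_goals
    rcases eq_or_ne (j : ℕ) (jstar v) with h1 | h1
    · obtain rfl : j = J := Fin.ext (by omega)
      simp [deltaN_apply, hpJ, hvJ, hJ, show jstar v ≠ I by omega]
    rcases eq_or_ne (j : ℕ) I with h2 | h2
    · obtain rfl : j = I := Fin.ext h2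
      simp [deltaN_apply, hpI, h, show (I : ℕ) ≠ jstar v by omega, CharTwo.add_self_eq_zero]
    · simp [deltaN_apply, h1, h2, hpj j h1 h2]

lemma mem_children_iff (hn : 0 < n) :
    v ∈ children e ↔ v ≠ 0 ∧ parent v = e :=
  ⟨parent_of_mem_children hn, fun ⟨hv, he⟩ => he ▸ mem_children_parent hv⟩

lemma Q_le_of_forall_notMem_eq (q : Fin n → ZMod 2 → NNReal) (s : Finset (Fin n))
    (hs : ∀ j ∉ s, v j = e j) (h : ∏ j ∈ s, q j (v j) ≤ ∏ j ∈ s, q j (e j)) :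
    Q q v ≤ Q q e := by
  have hc : ∏ j ∈ sᶜ, q j (v j) = ∏ j ∈ sᶜ, q j (e j) :=
    Finset.prod_congr rfl fun j hj => by rw [hs j (Finset.mem_compl.1 hj)]
  rw [Q, Q, ← s.prod_mul_prod_compl, ← s.prod_mul_prod_compl fun j => q j (e j), hc]
  gcongr

lemma Q_le_Q_parent {q : Fin n → ZMod 2 → NNReal} (H1 : ∀ j, q j 1 ≤ q j 0)
    (H2 : ∀ j l : Fin n, j < l → q j 0 * q l 1 ≤ q j 1 * q l 0) (hv : v ≠ 0) :
    Q q v ≤ Q q (parent v) := by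
  obtain ⟨J, hJ, hvJ⟩ := exists_apply_jstar hv
  have hpJ : parent v J = 0 := by rw [parent_apply hv, if_pos hJ]
  -- `parent v` differs from `v` at `J` and, exactly when `v` vanishes just below `J`, also there:
  -- (H2) covers the two-coordinate case, (H1) the other one.
  by_cases hI : ∃ I : Fin n, (I : ℕ) + 1 = jstar v ∧ v I = 0
  · obtain ⟨I, hIJ, hvI⟩ := hI
    have hIJ' : I < J := by rw [Fin.lt_def]; omega
    have hpI : parent v I = 1 := parent_apply_of_add_one_eq hv hIJ
    refine Q_le_of_forall_notMem_eq q {I, J} (fun j hj => ?_) ?_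
    · simp only [Finset.mem_insert, Finset.mem_singleton, not_or, Fin.ext_iff] at hj
      rw [parent_apply hv, if_neg (by omega), if_neg (by omega)]
    · rw [Finset.prod_pair hIJ'.ne, Finset.prod_pair hIJ'.ne, hvI, hvJ, hpI, hpJ]
      exact H2 I J hIJ'
  · refine Q_le_of_forall_notMem_eq q {J} (fun j hj => ?_) ?_
    · rw [Finset.mem_singleton, Fin.ext_iff] at hj
      rw [parent_apply hv, if_neg (by omega)]
      split_ifs with h
      · exact Fin.eq_one_of_ne_zero _ fun h0 => hI ⟨j, by omega, h0⟩
      · rfl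
    · simpa [hvJ, hpJ] using H1 J

def fringe (A : Finset (Fin n → ZMod 2)) : Finset (Fin n → ZMod 2) :=
  Finset.univ.filter fun v => v ∉ A ∧ (v = 0 ∨ parent v ∈ A)

def ParentClosed (A : Finset (Fin n → ZMod 2)) : Prop :=
  ∀ v ∈ A, v ≠ 0 → parent v ∈ A

section fringe

variable {A : Finset (Fin n → ZMod 2)} {x : Fin n → ZMod 2}

lemma mem_fringe : v ∈ fringe A ↔ v ∉ A ∧ (v = 0 ∨ parent v ∈ A) := by
  simp [fringe]

lemma fringe_empty : fringe (∅ : Finset (Fin n → ZMod 2)) = {0} := by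
  ext v
  simp [mem_fringe]

lemma ParentClosed.insert (hA : ParentClosed A) (hx : x ∈ fringe A) :
    ParentClosed (insert x A) := by
  intro v hv hv0
  rcases Finset.mem_insert.1 hv with rfl | hv
  · exact Finset.mem_insert_of_mem ((mem_fringe.1 hx).2.resolve_left hv0)
  · exact Finset.mem_insert_of_mem (hA v hv hv0)

lemma fringe_insert (hn : 0 < n) (hA : ParentClosed A) (hx : x ∈ fringe A) :
    fringe (insert x A) = (fringe A).erase x ∪ children x := by
  obtain ⟨hxA, hx0⟩ := mem_fringe.1 hx
  have hnew : ∀ v, v ≠ 0 → parent v = x → v ≠ x ∧ v ∉ A := by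
    intro v hv hpv
    refine ⟨fun hvx => ?_, fun hvA => hxA (hpv ▸ hA v hvA hv)⟩
    subst hvx
    exact hxA (hpv ▸ hx0.resolve_left hv)
  ext v
  simp only [mem_fringe, Finset.mem_union, Finset.mem_erase, Finset.mem_insert,
    mem_children_iff hn]
  have hchild := hnew v
  tauto

lemma fringe_nonempty (hv : v ∉ A) : (fringe A).Nonempty := by
  induction hk : jstar v using Nat.strong_induction_on generalizing v with
  | _ k ih =>
    by_cases hp : v = 0 ∨ parent v ∈ A
    · exact ⟨v, mem_fringe.2 ⟨hv, hp⟩⟩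
    by_cases hp0 : parent v = 0
    · exact ⟨0, mem_fringe.2 ⟨hp0 ▸ fun h => hp (Or.inr h), Or.inl rfl⟩⟩
    exact ih _ (hk ▸ jstar_parent_lt hp0) (fun h => hp (Or.inr h)) rfl

lemma fringe_nonempty_of_card_lt (hA : A.card < 2 ^ n) : (fringe A).Nonempty := by
  obtain ⟨v, -, hv⟩ := Finset.exists_mem_notMem_of_card_lt_card (s := A) (t := Finset.univ)
    (by simpa using hA)
  exact fringe_nonempty hv

end fringe

def queried (E : ℕ → Fin n → ZMod 2) (g : ℕ) : Finset (Fin n → ZMod 2) :=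
  (Finset.range g).image E

lemma queried_succ (E : ℕ → Fin n → ZMod 2) (g : ℕ) :
    queried E (g + 1) = insert (E g) (queried E g) := by
  simp [queried, Finset.range_add_one, Finset.image_insert]

namespace SGRANDRun

variable {q : Fin n → ZMod 2 → NNReal} {S : ℕ → Finset (Fin n → ZMod 2)}
  {E : ℕ → Fin n → ZMod 2}

theorem eq_fringe_queried (hrun : SGRANDRun q S E) (hn : 0 < n) {g : ℕ} (hg : g ≤ 2 ^ n) :
    S g = fringe (queried E g) ∧ ParentClosed (queried E g) ∧ (queried E g).card = g := by
  induction g with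
  | zero => simp [hrun.1, queried, fringe_empty, ParentClosed]
  | succ g ih =>
    obtain ⟨hS, hclosed, hcard⟩ := ih (by omega)
    have hx := (hrun.2 g (hS ▸ fringe_nonempty_of_card_lt (by omega))).1
    obtain ⟨-, -, hstep⟩ := hrun.2 g ⟨_, hx⟩
    rw [hS] at hx
    rw [queried_succ, hstep, hS, fringe_insert hn hclosed hx,
      Finset.card_insert_of_notMem (mem_fringe.1 hx).1, hcard]
    exact ⟨rfl, hclosed.insert hx, rfl⟩

theorem nonempty (hrun : SGRANDRun q S E) (hn : 0 < n) {g : ℕ} (hg : g < 2 ^ n) :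
    (S g).Nonempty := by
  obtain ⟨hS, -, hcard⟩ := hrun.eq_fringe_queried hn hg.le
  exact hS ▸ fringe_nonempty_of_card_lt (by rwa [hcard])

theorem exists_eq (hrun : SGRANDRun q S E) (hn : 0 < n) (v : Fin n → ZMod 2) :
    ∃ g < 2 ^ n, E g = v := by
  have hcard := (hrun.eq_fringe_queried hn le_rfl).2.2
  have huniv : queried E (2 ^ n) = Finset.univ := Finset.eq_univ_of_card _ (by simpa using hcard)
  have hv : v ∈ queried E (2 ^ n) := huniv ▸ Finset.mem_univ v
  simpa [queried] using hv

theorem Q_succ_le (hrun : SGRANDRun q S E) (hn : 0 < n) (H1 : ∀ j, q j 1 ≤ q j 0)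
    (H2 : ∀ j l : Fin n, j < l → q j 0 * q l 1 ≤ q j 1 * q l 0) {g : ℕ}
    (hg : g + 1 < 2 ^ n) :
    Q q (E (g + 1)) ≤ Q q (E g) := by
  obtain ⟨-, hmax, hstep⟩ := hrun.2 g (hrun.nonempty hn (by omega))
  have hmem := (hrun.2 (g + 1) (hrun.nonempty hn hg)).1
  rw [hstep, Finset.mem_union] at hmem
  rcases hmem with hmem | hmem
  · exact hmax _ (Finset.mem_of_mem_erase hmem)
  · obtain ⟨hv, hparent⟩ := parent_of_mem_children hn hmem
    exact hparent ▸ Q_le_Q_parent H1 H2 hv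

theorem Q_le_of_le (hrun : SGRANDRun q S E) (hn : 0 < n) (H1 : ∀ j, q j 1 ≤ q j 0)
    (H2 : ∀ j l : Fin n, j < l → q j 0 * q l 1 ≤ q j 1 * q l 0) {g₁ g₂ : ℕ}
    (h : g₁ ≤ g₂) (hg₂ : g₂ < 2 ^ n) : Q q (E g₂) ≤ Q q (E g₁) := by
  induction g₂, h using Nat.le_induction with
  | base => exact le_rfl
  | succ g _ ih => exact (hrun.Q_succ_le hn H1 H2 hg₂).trans (ih (by omega))

end SGRANDRun

theorem sgrand_ml {n : ℕ} (hn : 1 ≤ n) (q : Fin n → ZMod 2 → NNReal)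
    (H1 : ∀ j, q j 1 ≤ q j 0)
    (H2 : ∀ j l : Fin n, j < l → q j 0 * q l 1 ≤ q j 1 * q l 0)
    (S : ℕ → Finset (Fin n → ZMod 2)) (E : ℕ → Fin n → ZMod 2)
    (hrun : SGRANDRun q S E)
    (Err : Set (Fin n → ZMod 2)) (hErr : Err.Nonempty) :
    ∃ g < 2 ^ n, (S g).Nonempty ∧ E g ∈ Err ∧
      (∀ g' < g, E g' ∉ Err) ∧ ∀ v ∈ Err, Q q v ≤ Q q (E g) := by
  classical
  have hex : ∃ g, g < 2 ^ n ∧ E g ∈ Err := by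
    obtain ⟨v, hv⟩ := hErr
    obtain ⟨g, hg, rfl⟩ := hrun.exists_eq hn v
    exact ⟨g, hg, hv⟩
  obtain ⟨hlt, hmem⟩ := Nat.find_spec hex
  refine ⟨Nat.find hex, hlt, hrun.nonempty hn hlt, hmem,
    fun g hg hgErr => Nat.find_min hex hg ⟨hg.trans hlt, hgErr⟩, fun v hv => ?_⟩
  obtain ⟨g, hg, rfl⟩ := hrun.exists_eq hn v
  exact hrun.Q_le_of_le hn H1 H2 (Nat.find_min' hex ⟨hg, hv⟩) hg
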